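/- arXiv:math-ph/0508046 — 5 statements merged into one kernel-verified Lean document; each statement's English description precedes it below -/
import Mathlib

section
/- Let n ≥ 2 and let U be an n×n unitary complex matrix. Then P⁻¹UP = U holds for every n×n permutation matrix P if and only if U = aI + bJ for some complex numbers a, b satisfying |a| = 1 and |a + n·b| = 1. -/
/-!
Conjugation by a permutation matrix permutes rows and columns simultaneously, and the symmetric
group is transitive on ordered pairs of distinct indices; so an invariant matrix has constant
diagonal and constant off-diagonal entries, i.e. `U = a • 1 + b • J`. This matrix acts as
`a + n * b` on the constant vector and as `a` on vectors with coordinate sum zero (such as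
`e i - e j`, which needs `2 ≤ n`), and an eigenvalue of a unitary matrix has norm one.
-/

open Matrix Equiv

lemma Equiv.Perm.exists_apply_eq_and_apply_eq {ι : Type*} [DecidableEq ι] {i j k l : ι}
    (hij : i ≠ j) (hkl : k ≠ l) : ∃ σ : Perm ι, σ i = k ∧ σ j = l := by
  have hτj : swap i k j ≠ k := by
    simpa only [swap_apply_left] using (swap i k).injective.ne hij.symm
  refine ⟨swap (swap i k j) l * swap i k, ?_, ?_⟩
  · rw [Perm.mul_apply, swap_apply_left, swap_apply_of_ne_of_ne hτj.symm hkl]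
  · rw [Perm.mul_apply, swap_apply_left]

namespace Matrix

variable {ι R : Type*} [DecidableEq ι]

lemma permMatrix_inv_mul_mul_permMatrix [Fintype ι] [CommRing R] (σ : Perm ι)
    (U : Matrix ι ι R) :
    (σ.permMatrix R)⁻¹ * U * σ.permMatrix R = U.submatrix σ.symm σ.symm := by
  have hinv : (σ.permMatrix R)⁻¹ = σ⁻¹.permMatrix R :=
    inv_eq_right_inv (by rw [← permMatrix_mul, inv_mul_cancel, permMatrix_one])
  rw [hinv, Matrix.mul_assoc, PEquiv.mul_toMatrix_toPEquiv, PEquiv.toMatrix_toPEquiv_mul]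
  rfl

section Invariant

variable {U : Matrix ι ι R} (hU : ∀ σ : Perm ι, U.submatrix σ σ = U)
include hU

lemma apply_eq_apply_of_forall_submatrix_eq {i j k l : ι} (hij : i ≠ j) (hkl : k ≠ l) :
    U k l = U i j := by
  obtain ⟨σ, rfl, rfl⟩ := Perm.exists_apply_eq_and_apply_eq hij hkl
  exact congr_fun₂ (hU σ) i j

lemma eq_smul_one_add_smul_of_forall_submatrix_eq [Ring R] {i j : ι} (hij : i ≠ j) :
    U = (U i i - U i j) • 1 + U i j • of fun _ _ => 1 := by
  ext k l
  rcases eq_or_ne k l with rfl | hkl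
  · have hdiag : U k k = U i i := by simpa using congr_fun₂ (hU (Equiv.swap i k)) i i
    simp [hdiag]
  · simp [one_apply_ne hkl, apply_eq_apply_of_forall_submatrix_eq hU hij hkl]

end Invariant

section SmulOneAddSmulOfOne

variable (a b : R)

lemma submatrix_smul_one_add_smul_of_one [Semiring R] (σ : Perm ι) :
    (a • (1 : Matrix ι ι R) + b • of fun _ _ => 1).submatrix σ σ =
      a • 1 + b • of fun _ _ => 1 := by
  ext k l
  simp [one_apply, σ.injective.eq_iff]

variable [Fintype ι] [CommSemiring R]

lemma smul_one_add_smul_of_one_mulVec (v : ι → R) :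
    (a • (1 : Matrix ι ι R) + b • of fun _ _ => 1) *ᵥ v =
      a • v + (b * ∑ i, v i) • fun _ => 1 := by
  rw [add_mulVec, smul_mulVec, smul_mulVec, one_mulVec]
  ext k
  simp [mulVec, dotProduct]

lemma smul_one_add_smul_of_one_mulVec_const :
    (a • (1 : Matrix ι ι R) + b • of fun _ _ => 1) *ᵥ (fun _ => 1) =
      (a + Fintype.card ι * b) • fun _ => 1 := by
  rw [smul_one_add_smul_of_one_mulVec]
  ext k
  simp [mul_comm]

lemma smul_one_add_smul_of_one_mulVec_of_sum_eq_zero {v : ι → R} (hv : ∑ i, v i = 0) :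
    (a • (1 : Matrix ι ι R) + b • of fun _ _ => 1) *ᵥ v = a • v := by
  rw [smul_one_add_smul_of_one_mulVec, hv, mul_zero, zero_smul, add_zero]

end SmulOneAddSmulOfOne

open scoped ComplexOrder in
lemma norm_eq_one_of_mulVec_eq_smul {𝕜 : Type*} [RCLike 𝕜] [Fintype ι] {U : Matrix ι ι 𝕜}
    (hU : U ∈ unitaryGroup ι 𝕜) {v : ι → 𝕜} (hv : v ≠ 0) {μ : 𝕜} (h : U *ᵥ v = μ • v) :
    ‖μ‖ = 1 := by
  have hnorm : star (U *ᵥ v) ⬝ᵥ (U *ᵥ v) = star v ⬝ᵥ v := by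
    rw [star_mulVec, ← dotProduct_mulVec, mulVec_mulVec, ← star_eq_conjTranspose,
      (mem_unitaryGroup_iff').mp hU, one_mulVec]
  rw [h, star_smul, smul_dotProduct, dotProduct_smul, smul_smul, smul_eq_mul] at hnorm
  have hμ : star μ * μ = 1 :=
    mul_right_cancel₀ (dotProduct_star_self_eq_zero.not.mpr hv) (by rwa [one_mul])
  rw [RCLike.star_def, RCLike.conj_mul] at hμ
  exact_mod_cast (pow_eq_one_iff_of_nonneg (norm_nonneg μ) two_ne_zero).mp (by exact_mod_cast hμ)

end Matrix

theorem stmt_2 (n : ℕ) (hn : 2 ≤ n) (U : Matrix (Fin n) (Fin n) ℂ)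
    (hU : U ∈ Matrix.unitaryGroup (Fin n) ℂ) :
    (∀ σ : Equiv.Perm (Fin n),
      (σ.permMatrix ℂ)⁻¹ * U * σ.permMatrix ℂ = U) ↔
    ∃ a b : ℂ, U = a • (1 : Matrix (Fin n) (Fin n) ℂ)
        + b • (Matrix.of fun _ _ => (1 : ℂ))
      ∧ ‖a‖ = 1 ∧ ‖a + n * b‖ = 1 := by
  simp only [permMatrix_inv_mul_mul_permMatrix]
  constructor
  · intro h
    have hsub : ∀ σ : Perm (Fin n), U.submatrix σ σ = U := fun σ => by
      simpa using h σ.symm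
    obtain ⟨i, j, hij⟩ := (Fin.nontrivial_iff_two_le.mpr hn).exists_pair_ne
    obtain ⟨a, b, rfl⟩ : ∃ a b : ℂ, U = a • 1 + b • of fun _ _ => 1 :=
      ⟨_, _, eq_smul_one_add_smul_of_forall_submatrix_eq hsub hij⟩
    refine ⟨a, b, rfl, ?_, ?_⟩
    · refine norm_eq_one_of_mulVec_eq_smul hU (v := Pi.single i 1 - Pi.single j 1) ?_ ?_
      · exact Function.ne_iff.mpr ⟨i, by simp [hij]⟩
      · exact smul_one_add_smul_of_one_mulVec_of_sum_eq_zero _ _ (by simp)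
    · refine norm_eq_one_of_mulVec_eq_smul hU (v := fun _ => 1)
        (Function.ne_iff.mpr ⟨i, one_ne_zero⟩) ?_
      rw [smul_one_add_smul_of_one_mulVec_const, Fintype.card_fin]
  · rintro ⟨a, b, rfl, -, -⟩ σ
    exact submatrix_smul_one_add_smul_of_one a b σ.symm
end

section
/- Let n ≥ 2, let α be a real number, and set U = (2/(n+iα))·J − I. Then for vectors Ψ = (ψ₁,…,ψₙ) and Ψ′ = (ψ′₁,…,ψ′ₙ) in ℂⁿ, the condition (U−I)Ψ + i(U+I)Ψ′ = 0 holds if and only if ψⱼ = ψₖ for all j, k ∈ {1,…,n} and ∑_{j=1}^n ψ′ⱼ = α·ψ₁. -/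
open Matrix BigOperators

theorem stmt_7 (n : ℕ) (hn : 2 ≤ n) (α : ℝ)
    (U : Matrix (Fin n) (Fin n) ℂ)
    (hU : U = (2 / ((n : ℂ) + Complex.I * α)) • (Matrix.of fun _ _ => (1 : ℂ))
      - 1)
    (Ψ Ψ' : Fin n → ℂ) :
    (U - 1).mulVec Ψ + Complex.I • (U + 1).mulVec Ψ' = 0 ↔
    ((∀ j k : Fin n, Ψ j = Ψ k)
      ∧ (∑ j, Ψ' j) = (α : ℂ) * Ψ ⟨0, by omega⟩) := by
  have hd : ((n : ℂ) + Complex.I * α) ≠ 0 := by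
    intro h
    have h2 := congrArg Complex.re h
    simp [Complex.add_re, Complex.mul_re] at h2
    omega
  have h2 : ((n : ℂ) + Complex.I * α) * (2 / ((n : ℂ) + Complex.I * α)) = 2 :=
    mul_div_cancel₀ 2 hd
  have key : ∀ k, ((U - 1).mulVec Ψ + Complex.I • (U + 1).mulVec Ψ') k
      = (2 / ((n : ℂ) + Complex.I * α)) * (∑ j, Ψ j) - 2 * Ψ k
        + Complex.I * ((2 / ((n : ℂ) + Complex.I * α)) * ∑ j, Ψ' j) := by
    intro k
    subst hU
    simp [mulVec, dotProduct, Matrix.sub_apply, Matrix.add_apply, Matrix.one_apply,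
      Matrix.smul_apply, smul_eq_mul, sub_mul, add_mul, ite_mul,
      Finset.sum_sub_distrib, Finset.sum_add_distrib, Finset.mul_sum]
    ring
  constructor
  · intro h
    have hcomp : ∀ k, (2 / ((n : ℂ) + Complex.I * α)) * (∑ j, Ψ j) - 2 * Ψ k
        + Complex.I * ((2 / ((n : ℂ) + Complex.I * α)) * ∑ j, Ψ' j) = 0 := by
      intro k
      rw [← key k, h]
      rfl
    have hconst : ∀ j k : Fin n, Ψ j = Ψ k := by
      intro j k
      have hj := hcomp j
      have hk := hcomp k
      linear_combination (hk - hj) / 2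
    refine ⟨hconst, ?_⟩
    have hsum : ∑ j, Ψ j = (n : ℂ) * Ψ ⟨0, by omega⟩ := by
      rw [Finset.sum_congr rfl (fun j _ => hconst j ⟨0, by omega⟩)]
      simp [Finset.card_univ, mul_comm]
    have E := hcomp ⟨0, by omega⟩
    rw [hsum] at E
    have E3 : (2 : ℂ) * Complex.I * (∑ j, Ψ' j)
        = 2 * Complex.I * ((α : ℂ) * Ψ ⟨0, by omega⟩) := by
      have E2 := congrArg (fun z => ((n : ℂ) + Complex.I * α) * z) E
      simp only [mul_zero] at E2
      linear_combination E2 - ((n : ℂ) * Ψ ⟨0, by omega⟩ + Complex.I * (∑ j, Ψ' j)) * h2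
    exact mul_left_cancel₀ (by simp [Complex.I_ne_zero]) E3
  · rintro ⟨hconst, hsum'⟩
    funext k
    rw [key k]
    have hsum : ∑ j, Ψ j = (n : ℂ) * Ψ ⟨0, by omega⟩ := by
      rw [Finset.sum_congr rfl (fun j _ => hconst j ⟨0, by omega⟩)]
      simp [Finset.card_univ, mul_comm]
    rw [hsum, hsum', hconst k ⟨0, by omega⟩]
    have : (0 : Fin n → ℂ) k = 0 := rfl
    rw [this]
    linear_combination Ψ ⟨0, by omega⟩ * h2
end

section
/- Let n ≥ 2, let β be a real number, and set U = aI + bJ with a = (iβ+n)/(iβ−n) and b = 2/(n−iβ). Then for vectors Ψ = (ψ₁,…,ψₙ) and Ψ′ = (ψ′₁,…,ψ′ₙ) in ℂⁿ, the condition (U−I)Ψ + i(U+I)Ψ′ = 0 holds if and only if ∑_{j=1}^n ψ′ⱼ = 0 and ψⱼ − ψₖ = (β/n)·(ψ′ⱼ − ψ′ₖ) for all j, k ∈ {1,…,n}. -/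
open Matrix BigOperators

/-!
Write `J` for the all-ones matrix and `S, S'` for the coordinate sums of `Ψ, Ψ'`. Since
`J *ᵥ Ψ = S • 1`, the `j`-th coordinate of `(U - I)Ψ + i(U + I)Ψ'` is, up to the nonzero factor
`2 / (iβ - n)`, equal to `n ψⱼ - S - β ψ'ⱼ - i S'`. Summing these over `j` gives
`-(β + i n) S'`, so `S' = 0`; subtracting two of them gives the `δ'` relations. Conversely,
`n ψⱼ - S = ∑ₖ (ψⱼ - ψₖ)`, which the relations turn into `β ψ'ⱼ`.
-/

theorem Matrix.smul_one_add_smul_of_one_mulVec_s9 {R ι : Type*} [CommSemiring R] [Fintype ι]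
    [DecidableEq ι] (a b : R) (v : ι → R) :
    (a • (1 : Matrix ι ι R) + b • Matrix.of fun _ _ => (1 : R)) *ᵥ v
      = a • v + fun _ => b * ∑ k, v k := by
  ext j
  simp [mulVec, dotProduct, add_mul, Finset.sum_add_distrib, Finset.mul_sum, one_apply]

theorem card_mul_sub_sum_eq_iff {K ι : Type*} [Field K] [Fintype ι] (x y : ι → K) (β c : K)
    (hn : (Fintype.card ι : K) ≠ 0) (hβc : β + Fintype.card ι * c ≠ 0) :
    (∀ j, Fintype.card ι * x j - ∑ k, x k = β * y j + c * ∑ k, y k) ↔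
      (∑ k, y k = 0 ∧ ∀ j k, x j - x k = β / Fintype.card ι * (y j - y k)) := by
  set n : K := (Fintype.card ι : K)
  constructor
  · intro h
    have hsum : (β + n * c) * ∑ k, y k = 0 := by
      have := Finset.sum_congr rfl fun j (_ : j ∈ Finset.univ) => h j
      simp only [Finset.sum_sub_distrib, Finset.sum_add_distrib, ← Finset.mul_sum,
        Finset.sum_const, Finset.card_univ, nsmul_eq_mul] at this
      linear_combination -this
    refine ⟨(mul_eq_zero.mp hsum).resolve_left hβc, fun j k => ?_⟩
    field_simp
    linear_combination h j - h k
  · rintro ⟨hy, hxy⟩ j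
    calc n * x j - ∑ k, x k = ∑ k, (x j - x k) := by
          simp [Finset.sum_sub_distrib, n]
      _ = β / n * (n * y j - ∑ k, y k) := by
          simp [hxy j, ← Finset.mul_sum, Finset.sum_sub_distrib, n]
      _ = β * y j + c * ∑ k, y k := by
          rw [hy]
          field_simp
          ring

theorem stmt_9 (n : ℕ) (hn : 2 ≤ n) (β : ℝ) (a b : ℂ)
    (ha : a = (Complex.I * β + n) / (Complex.I * β - n))
    (hb : b = 2 / ((n : ℂ) - Complex.I * β))
    (U : Matrix (Fin n) (Fin n) ℂ)
    (hU : U = a • (1 : Matrix (Fin n) (Fin n) ℂ)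
      + b • (Matrix.of fun _ _ => (1 : ℂ)))
    (Ψ Ψ' : Fin n → ℂ) :
    (U - 1).mulVec Ψ + Complex.I • (U + 1).mulVec Ψ' = 0 ↔
    ((∑ j, Ψ' j) = 0
      ∧ ∀ j k : Fin n, Ψ j - Ψ k = ((β : ℂ) / n) * (Ψ' j - Ψ' k)) := by
  have hn0 : (n : ℂ) ≠ 0 := Nat.cast_ne_zero.mpr (by omega)
  have hd : Complex.I * β - n ≠ 0 := fun h => hn0 (by simpa using congrArg Complex.re h)
  have hβn : (β : ℂ) + n * Complex.I ≠ 0 := fun h => hn0 (by simpa using congrArg Complex.im h)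
  have hcoord : ∀ j, ((U - 1).mulVec Ψ + Complex.I • (U + 1).mulVec Ψ') j
      = 2 / (Complex.I * β - n) * (n * Ψ j - ∑ k, Ψ k - (β * Ψ' j + Complex.I * ∑ k, Ψ' k)) := by
    intro j
    have hd' : (n : ℂ) - Complex.I * β ≠ 0 := fun h => hd (by linear_combination -h)
    simp only [sub_mulVec, add_mulVec, one_mulVec, Pi.add_apply, Pi.sub_apply, Pi.smul_apply,
      smul_eq_mul]
    simp only [hU, smul_one_add_smul_of_one_mulVec_s9, Pi.add_apply, Pi.smul_apply, smul_eq_mul, ha,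
      hb]
    field_simp
    linear_combination 2 * β * (n - Complex.I * β) * Ψ' j * Complex.I_sq
  rw [funext_iff]
  simp only [hcoord, Pi.zero_apply, mul_eq_zero, div_eq_zero_iff, hd, two_ne_zero, or_false,
    false_or, sub_eq_zero]
  simpa using card_mul_sub_sum_eq_iff Ψ Ψ' β Complex.I (by simpa using hn0) (by simpa using hβn)
end

section
/- Let n ≥ 2, let α be a real number, and set U = aI + bJ with a = (n−iα)/(n+iα) and b = −2/(n+iα). Then for vectors Ψ = (ψ₁,…,ψₙ) and Ψ′ = (ψ′₁,…,ψ′ₙ) in ℂⁿ, the condition (U−I)Ψ + i(U+I)Ψ′ = 0 holds if and only if ∑_{j=1}^n ψⱼ = 0 and ψ′ⱼ − ψ′ₖ = (α/n)·(ψⱼ − ψₖ) for all j, k ∈ {1,…,n}. -/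
open Matrix BigOperators

theorem stmt_10 (n : ℕ) (hn : 2 ≤ n) (α : ℝ) (a b : ℂ)
    (ha : a = ((n : ℂ) - Complex.I * α) / ((n : ℂ) + Complex.I * α))
    (hb : b = -2 / ((n : ℂ) + Complex.I * α))
    (U : Matrix (Fin n) (Fin n) ℂ)
    (hU : U = a • (1 : Matrix (Fin n) (Fin n) ℂ)
      + b • (Matrix.of fun _ _ => (1 : ℂ)))
    (Ψ Ψ' : Fin n → ℂ) :
    (U - 1).mulVec Ψ + Complex.I • (U + 1).mulVec Ψ' = 0 ↔
    ((∑ j, Ψ j) = 0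
      ∧ ∀ j k : Fin n, Ψ' j - Ψ' k = ((α : ℂ) / n) * (Ψ j - Ψ k)) := by
  have hn0 : (n : ℂ) ≠ 0 := Nat.cast_ne_zero.mpr (by omega)
  have hd : ((n : ℂ) + Complex.I * α) ≠ 0 := by
    intro h
    have h1 := congrArg Complex.re h
    simp [Complex.add_re, Complex.mul_re] at h1
    omega
  set S := ∑ j, Ψ j with hS
  set S' := ∑ j, Ψ' j with hS'
  have key : ∀ j, ((U - 1).mulVec Ψ + Complex.I • (U + 1).mulVec Ψ') j
      = (a - 1) * Ψ j + b * S + Complex.I * ((a + 1) * Ψ' j + b * S') := by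
    intro j
    simp only [hU, Pi.add_apply, Pi.smul_apply, Matrix.mulVec, dotProduct,
      Matrix.sub_apply, Matrix.add_apply, Matrix.smul_apply, Matrix.one_apply,
      Matrix.of_apply, smul_eq_mul]
    simp only [add_mul, sub_mul, mul_one, ite_mul, one_mul, zero_mul, mul_ite, mul_zero,
      Finset.sum_add_distrib, Finset.sum_sub_distrib, Finset.sum_ite_eq, Finset.mem_univ,
      if_true, ← Finset.mul_sum, ← hS, ← hS']
    ring
  have factor : ∀ x y : ℂ, (a - 1) * x + b * S + Complex.I * ((a + 1) * y + b * S')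
      = (-2 / ((n : ℂ) + Complex.I * α))
        * (Complex.I * α * x + S - Complex.I * (n : ℂ) * y + Complex.I * S') := by
    intro x y
    rw [ha, hb]
    field_simp
    ring
  have hmain : ∀ j, ((U - 1).mulVec Ψ + Complex.I • (U + 1).mulVec Ψ') j = 0 ↔
      Complex.I * α * Ψ j + S - Complex.I * (n : ℂ) * Ψ' j + Complex.I * S' = 0 := by
    intro j
    rw [key j, factor, mul_eq_zero]
    simp [div_eq_zero_iff, hd]
  constructor
  · intro h
    have hF : ∀ j, Complex.I * α * Ψ j + S - Complex.I * (n : ℂ) * Ψ' j + Complex.I * S' = 0 :=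
      fun j => (hmain j).mp (by rw [h]; rfl)
    have h2 : ∑ j, (Complex.I * α * Ψ j + S - Complex.I * (n : ℂ) * Ψ' j + Complex.I * S') = 0 :=
      Finset.sum_eq_zero fun j _ => hF j
    simp only [Finset.sum_add_distrib, Finset.sum_sub_distrib, ← Finset.mul_sum,
      Finset.sum_const, Finset.card_univ, Fintype.card_fin, nsmul_eq_mul, ← hS, ← hS'] at h2
    have hS0 : S = 0 := by
      rcases mul_eq_zero.mp (show ((n : ℂ) + Complex.I * α) * S = 0 by linear_combination h2) with
        h' | h'
      · exact absurd h' hd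
      · exact h'
    refine ⟨hS0, fun j k => ?_⟩
    linear_combination (Complex.I / (n : ℂ)) * (hF j - hF k)
      + (Ψ' j - Ψ' k - (α : ℂ) / n * (Ψ j - Ψ k)) * Complex.I_sq
      + (Complex.I ^ 2 * (Ψ' j - Ψ' k)) * (mul_inv_cancel₀ hn0)
  · rintro ⟨hS0, hdiff⟩
    funext j
    rw [Pi.zero_apply, hmain j]
    have hsum' : ∑ k, (Ψ' j - Ψ' k) = ∑ k, (α : ℂ) / n * (Ψ j - Ψ k) :=
      Finset.sum_congr rfl fun k _ => hdiff j k
    simp only [Finset.sum_sub_distrib, Finset.sum_const, Finset.card_univ, Fintype.card_fin,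
      nsmul_eq_mul, ← Finset.mul_sum, ← hS, ← hS'] at hsum'
    have hα : (α : ℂ) / n * (n : ℂ) = α := div_mul_cancel₀ _ hn0
    linear_combination (-Complex.I) * hsum' + (-(Complex.I) * Ψ j) * hα
      + (1 + Complex.I * α / n) * hS0
end

section
/- Let a be a complex number with |a| = 1 and a ≠ −1, and let κ be a complex number with Re κ > 0 and i(a−1) + κ(a+1) ≠ 0. Define G^a_κ(x,y) = (i(a−1)·sinh(κ·min(x,y)) + κ(a+1)·cosh(κ·min(x,y)))·e^{−κ·max(x,y)}/(κ·(i(a−1)+κ(a+1))) for x, y ≥ 0. Then for every continuous function f : [0,∞) → ℂ with compact support, the function ψ(x) = ∫₀^∞ G^a_κ(x,y)·f(y) dy is continuously differentiable on [0,∞), satisfies the boundary condition (a−1)·ψ(0) + i(a+1)·ψ′(0) = 0, and satisfies −ψ″(x) + κ²·ψ(x) = f(x) at every point x > 0 at which f is continuous. -/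
open Complex Set

/-- Green function of `-d²/dx² + κ²` on the half-line with boundary condition
`(a-1)ψ(0) + i(a+1)ψ'(0) = 0` at the origin. -/
noncomputable def greenA (a κ : ℂ) (x y : ℝ) : ℂ :=
  (Complex.I * (a - 1) * Complex.sinh (κ * (min x y : ℝ))
      + κ * (a + 1) * Complex.cosh (κ * (min x y : ℝ)))
    * Complex.exp (-κ * (max x y : ℝ))
    / (κ * (Complex.I * (a - 1) + κ * (a + 1)))

/-!
`u(t) = i(a-1) sinh κt + κ(a+1) cosh κt` and `v(t) = e^{-κt}` both solve `φ'' = κ²φ`; `u`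
satisfies the boundary condition at `0`, and `v' u - u' v = -W` with
`W = κ(i(a-1) + κ(a+1))`. Since `G(x, y) = u(min x y) v(max x y) / W`,
`ψ(x) = (v(x) ∫₀ˣ u f + u(x) ∫ₓ^∞ v f) / W` is the variation-of-parameters formula: the
endpoint terms cancel in `ψ'`, and in `ψ''` they add up to `(v' u - u' v) f / W = -f`.
To differentiate on the closed half-line, `f` is replaced by the continuous function `f (max t 0)`.
-/

open MeasureTheory

theorem ContinuousOn.integrableOn_of_hasCompactSupport {X E : Type*} [TopologicalSpace X]
    [T2Space X] [MeasurableSpace X] [OpensMeasurableSpace X] {μ : Measure X}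
    [IsFiniteMeasureOnCompacts μ] [NormedAddCommGroup E] {f : X → E} {s : Set X}
    (hf : ContinuousOn f s) (hs : IsClosed s) (hfc : HasCompactSupport f) :
    IntegrableOn f s μ :=
  ((hf.mono inter_subset_left).integrableOn_compact
      (hfc.isCompact.inter_left hs)).of_forall_sdiff_eq_zero
    hs.measurableSet fun _ hx => image_eq_zero_of_notMem_tsupport fun h => hx.2 ⟨hx.1, h⟩

section VariationOfParameters

variable {u v g p q p' q' : ℝ → ℂ} {C : ℂ}

/-- For `(p, q) = (u, v)` the variation-of-parameters solution built from `u` and `v`;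
for `(p, q) = (u', v')` its derivative. -/
noncomputable def varParams (u v g : ℝ → ℂ) (C : ℂ) (p q : ℝ → ℂ) (x : ℝ) : ℂ :=
  q x * (∫ t in (0 : ℝ)..x, u t * g t) + p x * (C - ∫ t in (0 : ℝ)..x, v t * g t)

theorem varParams_zero : varParams u v g C p q 0 = p 0 * C := by
  simp [varParams]

theorem hasDerivAt_varParams (hu : Continuous u) (hv : Continuous v) (hg : Continuous g) {x : ℝ}
    (hp : HasDerivAt p (p' x) x) (hq : HasDerivAt q (q' x) x) :
    HasDerivAt (varParams u v g C p q)
      (varParams u v g C p' q' x + (q x * u x - p x * v x) * g x) x := by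
  have hA := ((hu.mul hg).integral_hasStrictDerivAt 0 x).hasDerivAt
  have hB := ((hv.mul hg).integral_hasStrictDerivAt 0 x).hasDerivAt.const_sub C
  refine ((hq.mul hA).add (hp.mul hB)).congr_deriv ?_
  simp only [varParams, Pi.mul_apply]
  ring

theorem hasDerivAt_varParams_self {u' v' : ℝ → ℂ} (hu : ∀ t, HasDerivAt u (u' t) t)
    (hv : ∀ t, HasDerivAt v (v' t) t) (hg : Continuous g) (x : ℝ) :
    HasDerivAt (varParams u v g C u v) (varParams u v g C u' v' x) x := by
  have hu_cont : Continuous u := continuous_iff_continuousAt.2 fun t => (hu t).continuousAt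
  have hv_cont : Continuous v := continuous_iff_continuousAt.2 fun t => (hv t).continuousAt
  convert hasDerivAt_varParams (C := C) hu_cont hv_cont hg (hu x) (hv x) using 1
  ring

theorem hasDerivAt_varParams_deriv {u' v' : ℝ → ℂ} {c : ℂ} (hu : Continuous u)
    (hv : Continuous v) (hg : Continuous g) {x : ℝ} (hu' : HasDerivAt u' (c * u x) x)
    (hv' : HasDerivAt v' (c * v x) x) :
    HasDerivAt (varParams u v g C u' v')
      (c * varParams u v g C u v x + (v' x * u x - u' x * v x) * g x) x := by
  convert hasDerivAt_varParams (C := C) (p' := fun t => c * u t) (q' := fun t => c * v t)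
    hu hv hg hu' hv' using 2
  simp only [varParams]
  ring

end VariationOfParameters

section GreenFunction

variable (a κ : ℂ)

noncomputable def greenU (t : ℝ) : ℂ :=
  I * (a - 1) * sinh (κ * t) + κ * (a + 1) * cosh (κ * t)

noncomputable def greenU' (t : ℝ) : ℂ :=
  κ * (I * (a - 1) * cosh (κ * t) + κ * (a + 1) * sinh (κ * t))

noncomputable def greenV (t : ℝ) : ℂ := exp (-κ * t)

theorem continuous_greenU : Continuous (greenU a κ) := by
  unfold greenU; fun_prop

theorem continuous_greenV : Continuous (greenV κ) := by
  unfold greenV; fun_prop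

theorem hasDerivAt_greenU (t : ℝ) : HasDerivAt (greenU a κ) (greenU' a κ t) t := by
  have hκ := hasDerivAt_const_mul (x := (t : ℂ)) κ
  have h := ((hκ.csinh.const_mul (I * (a - 1))).add
    (hκ.ccosh.const_mul (κ * (a + 1)))).comp_ofReal
  exact h.congr_deriv (by simp only [greenU']; ring)

theorem hasDerivAt_greenU' (t : ℝ) : HasDerivAt (greenU' a κ) (κ ^ 2 * greenU a κ t) t := by
  have hκ := hasDerivAt_const_mul (x := (t : ℂ)) κ
  have h := (((hκ.ccosh.const_mul (I * (a - 1))).add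
    (hκ.csinh.const_mul (κ * (a + 1)))).const_mul κ).comp_ofReal
  exact h.congr_deriv (by simp only [greenU]; ring)

theorem hasDerivAt_greenV (t : ℝ) : HasDerivAt (greenV κ) (-κ * greenV κ t) t :=
  ((hasDerivAt_const_mul (x := (t : ℂ)) (-κ)).cexp.comp_ofReal).congr_deriv (mul_comm _ _)

theorem hasDerivAt_neg_mul_greenV (t : ℝ) :
    HasDerivAt (fun s => -κ * greenV κ s) (κ ^ 2 * greenV κ t) t :=
  ((hasDerivAt_greenV κ t).const_mul (-κ)).congr_deriv (by ring)

theorem greenU_boundary : (a - 1) * greenU a κ 0 + I * (a + 1) * greenU' a κ 0 = 0 := by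
  simp only [greenU, greenU', ofReal_zero, mul_zero, sinh_zero, cosh_zero]
  linear_combination κ * (a - 1) * (a + 1) * I_sq

theorem wronskian_greenV_greenU (x : ℝ) :
    -κ * greenV κ x * greenU a κ x - greenU' a κ x * greenV κ x
      = -(κ * (I * (a - 1) + κ * (a + 1))) := by
  have h : exp (-κ * x) * (cosh (κ * x) + sinh (κ * x)) = 1 := by
    rw [cosh_add_sinh, ← exp_add]
    simp
  simp only [greenU, greenU', greenV]
  linear_combination (-(κ * I * (a - 1)) - κ ^ 2 * (a + 1)) * h

variable {a κ} {x y : ℝ}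

theorem greenA_of_le (h : y ≤ x) :
    greenA a κ x y = greenV κ x * greenU a κ y / (κ * (I * (a - 1) + κ * (a + 1))) := by
  rw [greenA, min_eq_right h, max_eq_left h, greenU, greenV]
  ring

theorem greenA_of_ge (h : x ≤ y) :
    greenA a κ x y = greenU a κ x * greenV κ y / (κ * (I * (a - 1) + κ * (a + 1))) := by
  rw [greenA, min_eq_left h, max_eq_right h, greenU, greenV]

open intervalIntegral in
theorem integral_greenA_mul {g : ℝ → ℂ} (hg : Continuous g)
    (hvg : IntegrableOn (fun y => greenV κ y * g y) (Ioi 0)) (hx : 0 ≤ x) :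
    ∫ y in Ioi 0, greenA a κ x y * g y
      = varParams (greenU a κ) (greenV κ) g (∫ y in Ioi 0, greenV κ y * g y)
          (greenU a κ) (greenV κ) x / (κ * (I * (a - 1) + κ * (a + 1))) := by
  set W := κ * (I * (a - 1) + κ * (a + 1))
  have h_left : EqOn (fun y => greenA a κ x y * g y)
      (fun y => greenV κ x / W * (greenU a κ y * g y)) (uIcc 0 x) := by
    intro y hy
    rw [uIcc_of_le hx] at hy
    simp only [greenA_of_le hy.2]
    ring
  have h_right : EqOn (fun y => greenA a κ x y * g y)
      (fun y => greenU a κ x / W * (greenV κ y * g y)) (Ioi x) := by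
    intro y hy
    simp only [greenA_of_ge hy.le]
    ring
  have h_tail : IntegrableOn (fun y => greenV κ y * g y) (Ioi x) :=
    hvg.mono_set (Ioi_subset_Ioi hx)
  have h_int : IntervalIntegrable (fun y => greenA a κ x y * g y) volume 0 x := by
    refine Continuous.intervalIntegrable ?_ 0 x
    unfold greenA
    fun_prop
  rw [← integral_interval_add_Ioi' h_int
      (IntegrableOn.congr_fun (h_tail.const_mul _) h_right.symm measurableSet_Ioi),
    integral_congr h_left, setIntegral_congr_fun measurableSet_Ioi h_right,
    intervalIntegral.integral_const_mul, MeasureTheory.integral_const_mul, varParams,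
    ← integral_Ioi_sub_Ioi hvg hx]
  ring

end GreenFunction

theorem stmt_12_general (a κ : ℂ)
    (hκ : 0 < κ.re) (hden : Complex.I * (a - 1) + κ * (a + 1) ≠ 0)
    (f : ℝ → ℂ) (hf : ContinuousOn f (Ici 0)) (hfc : HasCompactSupport f)
    (ψ : ℝ → ℂ) (hψ : ∀ x : ℝ, ψ x = ∫ y in Ioi (0 : ℝ), greenA a κ x y * f y) :
    ∃ ψ' : ℝ → ℂ,
      (∀ x ∈ Ici (0 : ℝ), HasDerivWithinAt ψ (ψ' x) (Ici 0) x)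
      ∧ ContinuousOn ψ' (Ici 0)
      ∧ (a - 1) * ψ 0 + Complex.I * (a + 1) * ψ' 0 = 0
      ∧ ∀ x : ℝ, 0 < x → ContinuousAt f x →
          HasDerivAt ψ' (κ ^ 2 * ψ x - f x) x := by
  set W := κ * (I * (a - 1) + κ * (a + 1))
  have hW : W ≠ 0 := mul_ne_zero (by rintro rfl; simp at hκ) hden
  set g : ℝ → ℂ := fun t => f (max t 0)
  have hg : Continuous g :=
    hf.comp_continuous (continuous_id.max continuous_const) fun t => le_max_right t 0
  have hfg : EqOn f g (Ici 0) := fun t ht => by simp only [g, max_eq_left (mem_Ici.1 ht)]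
  have hvf : IntegrableOn (fun y => greenV κ y * f y) (Ici 0) :=
    ((continuous_greenV κ).continuousOn.mul hf).integrableOn_of_hasCompactSupport isClosed_Ici
      hfc.mul_left
  have hvg : IntegrableOn (fun y => greenV κ y * g y) (Ioi 0) :=
    (hvf.mono_set Ioi_subset_Ici_self).congr_fun
      (fun y hy => by simp only [hfg (mem_Ici.2 (le_of_lt hy))]) measurableSet_Ioi
  set Φ := varParams (greenU a κ) (greenV κ) g (∫ y in Ioi 0, greenV κ y * g y)
  have hψΦ : EqOn ψ (fun x => Φ (greenU a κ) (greenV κ) x / W) (Ici 0) := fun x hx => by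
    rw [hψ]
    refine (setIntegral_congr_fun measurableSet_Ioi fun y hy => ?_).trans
      (integral_greenA_mul hg hvg hx)
    rw [hfg (mem_Ici.2 (le_of_lt hy))]
  have hΦ' (x : ℝ) := hasDerivAt_varParams_deriv (C := ∫ y in Ioi 0, greenV κ y * g y)
    (continuous_greenU a κ) (continuous_greenV κ) hg (hasDerivAt_greenU' a κ x)
    (hasDerivAt_neg_mul_greenV κ x)
  have hΦ (x : ℝ) :=
    hasDerivAt_varParams_self (C := ∫ y in Ioi 0, greenV κ y * g y) (hasDerivAt_greenU a κ)
      (hasDerivAt_greenV κ) hg x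
  refine ⟨fun x => Φ (greenU' a κ) (fun t => -κ * greenV κ t) x / W,
    fun x hx => ?_, ?_, ?_, ?_⟩
  · exact ((hΦ x).div_const W).hasDerivWithinAt.congr hψΦ (hψΦ hx)
  · exact (continuous_iff_continuousAt.2 fun x => ((hΦ' x).div_const W).continuousAt).continuousOn
  · rw [hψΦ self_mem_Ici]
    simp only [Φ, varParams_zero]
    linear_combination (∫ y in Ioi 0, greenV κ y * g y) / W * greenU_boundary a κ
  · intro x hx _
    refine ((hΦ' x).div_const W).congr_deriv ?_
    rw [hψΦ hx.le, ← hfg hx.le]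
    have hwr := wronskian_greenV_greenU a κ x
    field_simp
    linear_combination f x * hwr

theorem stmt_12 (a κ : ℂ) (ha : ‖a‖ = 1) (ha' : a ≠ -1)
    (hκ : 0 < κ.re) (hden : Complex.I * (a - 1) + κ * (a + 1) ≠ 0)
    (f : ℝ → ℂ) (hf : ContinuousOn f (Ici 0)) (hfc : HasCompactSupport f)
    (ψ : ℝ → ℂ) (hψ : ∀ x : ℝ, ψ x = ∫ y in Ioi (0 : ℝ), greenA a κ x y * f y) :
    ∃ ψ' : ℝ → ℂ,
      (∀ x ∈ Ici (0 : ℝ), HasDerivWithinAt ψ (ψ' x) (Ici 0) x)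
      ∧ ContinuousOn ψ' (Ici 0)
      ∧ (a - 1) * ψ 0 + Complex.I * (a + 1) * ψ' 0 = 0
      ∧ ∀ x : ℝ, 0 < x → ContinuousAt f x →
          HasDerivAt ψ' (κ ^ 2 * ψ x - f x) x :=
  stmt_12_general a κ hκ hden f hf hfc ψ hψ
end
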